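/- Let g: ℂ × ℍ → ℂ be smooth with H_M[g] = 0, where H_M := 8πiM ∂/∂τ + ∂²/∂ε². Then for all j ≥ 0, δ_ε^{2j}[ g(ε;τ) / exp(Mπε²/v) ]_{ε=0} = (M/π)^j R_{1/2}^j ( g(0;τ) ), where v = Im(τ), δ_ε := (1/(2πi)) ∂/∂ε, R_k := 2i ∂/∂τ + k/v is the Maass raising operator, and R_{1/2}^j := R_{1/2 + 2(j−1)} ∘ ⋯ ∘ R_{5/2} ∘ R_{1/2}. -/

import Mathlib

set_option maxHeartbeats 1000000


noncomputable section

/-- `∂/∂u`: real-direction derivative of a smooth function on `ℂ`. -/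
def du (f : ℂ → ℂ) (τ : ℂ) : ℂ := fderiv ℝ f τ 1

/-- `∂/∂v`: imaginary-direction derivative. -/
def dv (f : ℂ → ℂ) (τ : ℂ) : ℂ := fderiv ℝ f τ Complex.I

/-- Wirtinger derivative `∂/∂τ = (1/2)(∂/∂u − i ∂/∂v)`. -/
def wirt (f : ℂ → ℂ) (τ : ℂ) : ℂ := (du f τ - Complex.I * dv f τ) / 2

/-- Weight `k` Maass raising operator `R_k = 2i ∂/∂τ + k/v`. -/
def raiseOp (k : ℝ) (f : ℂ → ℂ) (τ : ℂ) : ℂ :=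
  2 * Complex.I * wirt f τ + ((k : ℂ) / (τ.im : ℂ)) * f τ

/-- Iterated raising operator `R_k^n = R_{k+2(n−1)} ∘ ⋯ ∘ R_{k+2} ∘ R_k`, `R_k^0 = id`. -/
def raiseIter (k : ℝ) : ℕ → (ℂ → ℂ) → (ℂ → ℂ)
  | 0, f => f
  | n + 1, f => raiseOp (k + 2 * n) (raiseIter k n f)

/-- Wirtinger derivative in the elliptic variable `ε` of `g(ε;τ)`. -/
def deps (g : ℂ → ℂ → ℂ) : ℂ → ℂ → ℂ := fun ε τ => wirt (fun e => g e τ) ε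

/-- `δ_ε := (1/(2πi)) ∂/∂ε`. -/
def deltaEps (g : ℂ → ℂ → ℂ) : ℂ → ℂ → ℂ :=
  fun ε τ => (1 / (2 * (Real.pi : ℂ) * Complex.I)) * deps g ε τ

/-- Iterates of `δ_ε`. -/
def deltaIter : ℕ → (ℂ → ℂ → ℂ) → (ℂ → ℂ → ℂ)
  | 0, g => g
  | n + 1, g => deltaEps (deltaIter n g)

/-- The level `M` heat operator `H_M = 8πiM ∂/∂τ + ∂²/∂ε²`. -/
def heatOp (M : ℤ) (g : ℂ → ℂ → ℂ) : ℂ → ℂ → ℂ :=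
  fun ε τ => 8 * (Real.pi : ℂ) * Complex.I * (M : ℂ) * wirt (g ε) τ + deps (deps g) ε τ

/-- Weight `k` hyperbolic Laplacian `Δ_k = −v²(∂_u²+∂_v²) + ikv(∂_u + i∂_v)`. -/
def lap (k : ℝ) (f : ℂ → ℂ) (τ : ℂ) : ℂ :=
  -(τ.im : ℂ) ^ 2 * (du (du f) τ + dv (dv f) τ)
    + Complex.I * (k : ℂ) * (τ.im : ℂ) * (du f τ + Complex.I * dv f τ)

/-! ### Auxiliary machinery -/

open scoped ContDiff
open Complex Function

/-- τ-Wirtinger derivative of a two-variable function. -/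
def tD (g : ℂ → ℂ → ℂ) : ℂ → ℂ → ℂ := fun ε τ => wirt (g ε) τ

section WirtBasics

lemma wirt_of_hasFDerivAt {f : ℂ → ℂ} {τ : ℂ} {L : ℂ →L[ℝ] ℂ} (h : HasFDerivAt f L τ) :
    wirt f τ = (L 1 - Complex.I * L Complex.I) / 2 := by
  simp [wirt, du, dv, h.fderiv]

lemma wirt_of_hasDerivAt {f : ℂ → ℂ} {τ d : ℂ} (h : HasDerivAt f d τ) :
    wirt f τ = d := by
  have h2 : HasFDerivAt f ((ContinuousLinearMap.smulRight (1 : ℂ →L[ℂ] ℂ) d).restrictScalars ℝ) τ :=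
    (h.hasFDerivAt).restrictScalars ℝ
  rw [wirt_of_hasFDerivAt h2]
  simp
  ring_nf
  rw [Complex.I_sq]
  ring

lemma wirt_const (c : ℂ) (τ : ℂ) : wirt (fun _ => c) τ = 0 :=
  wirt_of_hasDerivAt (hasDerivAt_const τ c)

lemma wirt_add {f g : ℂ → ℂ} {τ : ℂ} (hf : DifferentiableAt ℝ f τ)
    (hg : DifferentiableAt ℝ g τ) :
    wirt (fun z => f z + g z) τ = wirt f τ + wirt g τ := by
  rw [wirt_of_hasFDerivAt (f := fun z => f z + g z) ((hf.hasFDerivAt).add (hg.hasFDerivAt))]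
  simp [wirt, du, dv]
  ring

lemma wirt_mul {f g : ℂ → ℂ} {τ : ℂ} (hf : DifferentiableAt ℝ f τ)
    (hg : DifferentiableAt ℝ g τ) :
    wirt (fun z => f z * g z) τ = wirt f τ * g τ + f τ * wirt g τ := by
  rw [wirt_of_hasFDerivAt (f := fun z => f z * g z) ((hf.hasFDerivAt).mul (hg.hasFDerivAt))]
  simp [wirt, du, dv]
  ring

lemma wirt_const_mul {f : ℂ → ℂ} {τ : ℂ} (c : ℂ) (hf : DifferentiableAt ℝ f τ) :
    wirt (fun z => c * f z) τ = c * wirt f τ := by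
  rw [wirt_of_hasFDerivAt ((hf.hasFDerivAt).const_mul c)]
  simp [wirt, du, dv]
  ring

lemma wirt_congr {f g : ℂ → ℂ} {τ : ℂ} (h : f =ᶠ[nhds τ] g) : wirt f τ = wirt g τ := by
  simp [wirt, du, dv, h.fderiv_eq]

lemma wirt_comp_im {φ : ℂ → ℂ} {τ : ℂ} {d : ℂ} (h : HasDerivAt φ d ((τ.im : ℝ) : ℂ)) :
    wirt (fun σ => φ ((σ.im : ℝ) : ℂ)) τ = -Complex.I * d / 2 := by
  have hm : HasFDerivAt (fun σ : ℂ => ((σ.im : ℝ) : ℂ))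
      (Complex.ofRealCLM.comp Complex.imCLM) τ :=
    (Complex.ofRealCLM.comp Complex.imCLM).hasFDerivAt
  have hc := ((h.hasFDerivAt).restrictScalars ℝ).comp τ hm
  have hc2 : HasFDerivAt (fun σ : ℂ => φ ((σ.im : ℝ) : ℂ))
      ((ContinuousLinearMap.restrictScalars ℝ (ContinuousLinearMap.smulRight 1 d)).comp
        (Complex.ofRealCLM.comp Complex.imCLM)) τ := hc
  rw [wirt_of_hasFDerivAt hc2]
  simp

lemma I_cube : Complex.I^3 = -Complex.I := by
  rw [pow_succ, Complex.I_sq]; ring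

lemma I_four : Complex.I^4 = 1 := by
  rw [pow_succ, I_cube]; simp [Complex.I_mul_I]

end WirtBasics

section Slices

lemma hasFDerivAt_slice_left (q : ℂ → ℂ → ℂ) {ε τ : ℂ}
    (hq : DifferentiableAt ℝ (uncurry q) (ε, τ)) :
    HasFDerivAt (fun e => q e τ)
      ((fderiv ℝ (uncurry q) (ε, τ)).comp ((ContinuousLinearMap.id ℝ ℂ).prod 0)) ε :=
  by have := hq.hasFDerivAt.comp ε (HasFDerivAt.prodMk (hasFDerivAt_id (𝕜 := ℝ) ε) (hasFDerivAt_const τ ε)); exact this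

lemma hasFDerivAt_slice_right (q : ℂ → ℂ → ℂ) {ε τ : ℂ}
    (hq : DifferentiableAt ℝ (uncurry q) (ε, τ)) :
    HasFDerivAt (fun σ => q ε σ)
      ((fderiv ℝ (uncurry q) (ε, τ)).comp ((0 : ℂ →L[ℝ] ℂ).prod (ContinuousLinearMap.id ℝ ℂ))) τ :=
  hq.hasFDerivAt.comp τ (HasFDerivAt.prodMk (hasFDerivAt_const ε τ) (hasFDerivAt_id τ))

lemma deps_eq_pd (q : ℂ → ℂ → ℂ) {ε τ : ℂ} (hq : DifferentiableAt ℝ (uncurry q) (ε, τ)) :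
    deps q ε τ = (fderiv ℝ (uncurry q) (ε, τ) (1, 0)
      - Complex.I * fderiv ℝ (uncurry q) (ε, τ) (Complex.I, 0)) / 2 := by
  rw [deps, wirt_of_hasFDerivAt (hasFDerivAt_slice_left q hq)]; simp

lemma tD_eq_pd (q : ℂ → ℂ → ℂ) {ε τ : ℂ} (hq : DifferentiableAt ℝ (uncurry q) (ε, τ)) :
    tD q ε τ = (fderiv ℝ (uncurry q) (ε, τ) (0, 1)
      - Complex.I * fderiv ℝ (uncurry q) (ε, τ) (0, Complex.I)) / 2 := by
  rw [tD, wirt_of_hasFDerivAt (hasFDerivAt_slice_right q hq)]; simp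

end Slices

/-- Smoothness on the region `im ≠ 0`. -/
def Sm (q : ℂ → ℂ → ℂ) : Prop :=
  ∀ p : ℂ × ℂ, p.2.im ≠ 0 → ContDiffAt ℝ ∞ (uncurry q) p

section Smoothness

lemma eventually_im_ne {p : ℂ × ℂ} (hp : p.2.im ≠ 0) :
    ∀ᶠ p' : ℂ × ℂ in nhds p, p'.2.im ≠ 0 :=
  ((Complex.continuous_im.comp continuous_snd).continuousAt).eventually_ne hp

lemma eventually_im_ne' {τ : ℂ} (hp : τ.im ≠ 0) : ∀ᶠ σ : ℂ in nhds τ, σ.im ≠ 0 :=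
  (Complex.continuous_im.continuousAt).eventually_ne hp

lemma sm_pd (w : ℂ × ℂ) {q : ℂ → ℂ → ℂ} (hq : Sm q) :
    ∀ p : ℂ × ℂ, p.2.im ≠ 0 → ContDiffAt ℝ ∞ (fun p' => fderiv ℝ (uncurry q) p' w) p := by
  intro p hp
  exact ((hq p hp).fderiv_right (le_refl _)).clm_apply contDiffAt_const

lemma sm_deps {q : ℂ → ℂ → ℂ} (hq : Sm q) : Sm (deps q) := by
  intro p hp
  have heq : (fun p' : ℂ × ℂ => (fderiv ℝ (uncurry q) p' (1, 0)
      - Complex.I * fderiv ℝ (uncurry q) p' (Complex.I, 0)) / 2) =ᶠ[nhds p] uncurry (_root_.deps q) := by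
    filter_upwards [eventually_im_ne hp] with p' hp'
    exact (deps_eq_pd q ((hq p' hp').differentiableAt (by simp))).symm
  refine ContDiffAt.congr_of_eventuallyEq ?_ heq.symm
  exact (((sm_pd (1,0) hq p hp).sub ((contDiffAt_const).mul (sm_pd (Complex.I,0) hq p hp))).div_const 2)

lemma sm_tD {q : ℂ → ℂ → ℂ} (hq : Sm q) : Sm (tD q) := by
  intro p hp
  have heq : (fun p' : ℂ × ℂ => (fderiv ℝ (uncurry q) p' (0, 1)
      - Complex.I * fderiv ℝ (uncurry q) p' (0, Complex.I)) / 2) =ᶠ[nhds p] uncurry (_root_.tD q) := by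
    filter_upwards [eventually_im_ne hp] with p' hp'
    exact (tD_eq_pd q ((hq p' hp').differentiableAt (by simp))).symm
  refine ContDiffAt.congr_of_eventuallyEq ?_ heq.symm
  exact (((sm_pd (0,1) hq p hp).sub ((contDiffAt_const).mul (sm_pd (0,Complex.I) hq p hp))).div_const 2)

lemma sm_deltaEps {q : ℂ → ℂ → ℂ} (hq : Sm q) : Sm (deltaEps q) := by
  intro p hp
  exact contDiffAt_const.mul (sm_deps hq p hp)

lemma sm_deltaIter {q : ℂ → ℂ → ℂ} (hq : Sm q) (n : ℕ) : Sm (deltaIter n q) := by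
  induction n with
  | zero => exact hq
  | succ n ih => exact sm_deltaEps ih

lemma Sm.diff_left {q : ℂ → ℂ → ℂ} (hq : Sm q) {ε τ : ℂ} (hp : τ.im ≠ 0) :
    DifferentiableAt ℝ (fun e => q e τ) ε :=
  (hasFDerivAt_slice_left q
    ((hq (ε, τ) hp).differentiableAt (by simp))).differentiableAt

lemma Sm.diff_right {q : ℂ → ℂ → ℂ} (hq : Sm q) {ε τ : ℂ} (hp : τ.im ≠ 0) :
    DifferentiableAt ℝ (fun σ => q ε σ) τ :=
  (hasFDerivAt_slice_right q
    ((hq (ε, τ) hp).differentiableAt (by simp))).differentiableAt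

end Smoothness

section Commutation

lemma hasFDerivAt_pd_left (q : ℂ → ℂ → ℂ) {ε τ : ℂ}
    (hq : ContDiffAt ℝ ∞ (uncurry q) (ε, τ)) (w : ℂ × ℂ) :
    HasFDerivAt (fun e => fderiv ℝ (uncurry q) (e, τ) w)
      ((((ContinuousLinearMap.apply ℝ ℂ w).comp (fderiv ℝ (fderiv ℝ (uncurry q)) (ε, τ))).comp
        ((ContinuousLinearMap.id ℝ ℂ).prod 0))) ε := by
  have h1 : HasFDerivAt (fderiv ℝ (uncurry q)) (fderiv ℝ (fderiv ℝ (uncurry q)) (ε, τ)) (ε, τ) :=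
    ((hq.fderiv_right (m := ∞) le_rfl).differentiableAt (by simp)).hasFDerivAt
  exact ((ContinuousLinearMap.apply ℝ ℂ w).hasFDerivAt.comp (ε, τ) h1).comp ε
    (HasFDerivAt.prodMk (hasFDerivAt_id (𝕜 := ℝ) ε) (hasFDerivAt_const τ ε))

lemma hasFDerivAt_pd_right (q : ℂ → ℂ → ℂ) {ε τ : ℂ}
    (hq : ContDiffAt ℝ ∞ (uncurry q) (ε, τ)) (w : ℂ × ℂ) :
    HasFDerivAt (fun σ => fderiv ℝ (uncurry q) (ε, σ) w)
      ((((ContinuousLinearMap.apply ℝ ℂ w).comp (fderiv ℝ (fderiv ℝ (uncurry q)) (ε, τ))).comp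
        ((0 : ℂ →L[ℝ] ℂ).prod (ContinuousLinearMap.id ℝ ℂ)))) τ := by
  have h1 : HasFDerivAt (fderiv ℝ (uncurry q)) (fderiv ℝ (fderiv ℝ (uncurry q)) (ε, τ)) (ε, τ) :=
    ((hq.fderiv_right (m := ∞) le_rfl).differentiableAt (by simp)).hasFDerivAt
  exact ((ContinuousLinearMap.apply ℝ ℂ w).hasFDerivAt.comp (ε, τ) h1).comp τ
    (HasFDerivAt.prodMk (hasFDerivAt_const ε τ) (hasFDerivAt_id τ))

lemma deps_tD_comm {q : ℂ → ℂ → ℂ} (hq : Sm q) {ε τ : ℂ} (hp : τ.im ≠ 0) :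
    deps (tD q) ε τ = tD (deps q) ε τ := by
  have hsym := (hq (ε, τ) hp).isSymmSndFDerivAt (by simp; exact WithTop.coe_le_coe.2 le_top)
  have hL : deps (tD q) ε τ =
      ((fderiv ℝ (fderiv ℝ (uncurry q)) (ε, τ) (1, 0) (0, 1)
        - Complex.I * fderiv ℝ (fderiv ℝ (uncurry q)) (ε, τ) (1, 0) (0, Complex.I)) / 2
      - Complex.I * ((fderiv ℝ (fderiv ℝ (uncurry q)) (ε, τ) (Complex.I, 0) (0, 1)
        - Complex.I * fderiv ℝ (fderiv ℝ (uncurry q)) (ε, τ) (Complex.I, 0) (0, Complex.I)) / 2)) / 2 := by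
    rw [show deps (tD q) ε τ = wirt (fun e => tD q e τ) ε from rfl]
    have hev : (fun e => tD q e τ) =ᶠ[nhds ε] (fun e =>
        (fderiv ℝ (uncurry q) (e, τ) (0, 1)
          - Complex.I * fderiv ℝ (uncurry q) (e, τ) (0, Complex.I)) * (2⁻¹ : ℂ)) := by
      refine Filter.Eventually.of_forall (fun e => ?_)
      show tD q e τ = _
      rw [tD_eq_pd q ((hq (e, τ) hp).differentiableAt (by simp))]
      ring
    rw [wirt_congr hev]
    rw [wirt_of_hasFDerivAt (((hasFDerivAt_pd_left q (hq (ε, τ) hp) (0, 1)).fun_sub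
      ((hasFDerivAt_pd_left q (hq (ε, τ) hp) (0, Complex.I)).const_mul Complex.I)).mul_const (2⁻¹ : ℂ))]
    simp
    ring
  have hR : tD (deps q) ε τ =
      ((fderiv ℝ (fderiv ℝ (uncurry q)) (ε, τ) (0, 1) (1, 0)
        - Complex.I * fderiv ℝ (fderiv ℝ (uncurry q)) (ε, τ) (0, 1) (Complex.I, 0)) / 2
      - Complex.I * ((fderiv ℝ (fderiv ℝ (uncurry q)) (ε, τ) (0, Complex.I) (1, 0)
        - Complex.I * fderiv ℝ (fderiv ℝ (uncurry q)) (ε, τ) (0, Complex.I) (Complex.I, 0)) / 2)) / 2 := by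
    rw [show tD (deps q) ε τ = wirt (fun σ => deps q ε σ) τ from rfl]
    have hev : (fun σ => deps q ε σ) =ᶠ[nhds τ] (fun σ =>
        (fderiv ℝ (uncurry q) (ε, σ) (1, 0)
          - Complex.I * fderiv ℝ (uncurry q) (ε, σ) (Complex.I, 0)) * (2⁻¹ : ℂ)) := by
      filter_upwards [eventually_im_ne' hp] with σ hσ
      show deps q ε σ = _
      rw [deps_eq_pd q ((hq (ε, σ) hσ).differentiableAt (by simp))]
      ring
    rw [wirt_congr hev]
    rw [wirt_of_hasFDerivAt (((hasFDerivAt_pd_right q (hq (ε, τ) hp) (1, 0)).fun_sub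
      ((hasFDerivAt_pd_right q (hq (ε, τ) hp) (Complex.I, 0)).const_mul Complex.I)).mul_const (2⁻¹ : ℂ))]
    simp
    ring
  rw [hL, hR, hsym (1,0) (0,1), hsym (Complex.I,0) (0,1), hsym (1,0) (0,Complex.I),
    hsym (Complex.I,0) (0,Complex.I)]
  ring

lemma deltaEps_tD_comm {q : ℂ → ℂ → ℂ} (hq : Sm q) {ε τ : ℂ} (hp : τ.im ≠ 0) :
    deltaEps (tD q) ε τ = tD (deltaEps q) ε τ := by
  have h1 : tD (deltaEps q) ε τ
      = (1 / (2 * (Real.pi : ℂ) * Complex.I)) * wirt (fun σ => deps q ε σ) τ := by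
    rw [show tD (deltaEps q) ε τ
      = wirt (fun σ => (1 / (2 * (Real.pi : ℂ) * Complex.I)) * deps q ε σ) τ from rfl]
    exact wirt_const_mul _ ((sm_deps hq).diff_right hp)
  rw [h1, show deltaEps (tD q) ε τ
    = (1 / (2 * (Real.pi : ℂ) * Complex.I)) * deps (tD q) ε τ from rfl,
    deps_tD_comm hq hp]
  rfl

end Commutation

/-! ### The Gaussian factor -/

def EE (M : ℤ) : ℂ → ℂ → ℂ := fun ε σ => Complex.exp (-((M:ℂ) * Real.pi * ε^2 / (σ.im:ℂ)))

lemma hasDerivAt_EE_left (M : ℤ) (ε τ : ℂ) :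
    HasDerivAt (fun e => EE M e τ)
      (-(2*(M:ℂ)*Real.pi/(τ.im:ℂ))*ε * EE M ε τ) ε := by
  have h1 : HasDerivAt (fun e : ℂ => -((M:ℂ) * Real.pi * e^2 / (τ.im:ℂ)))
      (-((M:ℂ) * Real.pi * (2*ε) / (τ.im:ℂ))) ε := by
    have := (((hasDerivAt_pow 2 ε).const_mul ((M:ℂ) * Real.pi)).div_const ((τ.im:ℂ))).fun_neg
    refine this.congr_deriv ?_
    ring
  have := h1.cexp
  refine this.congr_deriv ?_
  rw [EE]
  ring

lemma wirt_EE_right (M : ℤ) (ε τ : ℂ) (hv : τ.im ≠ 0) :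
    wirt (fun σ => EE M ε σ) τ
      = -Complex.I * ((M:ℂ) * Real.pi * ε^2) / (2 * (τ.im:ℂ)^2) * EE M ε τ := by
  have hz : ((τ.im:ℝ):ℂ) ≠ 0 := Complex.ofReal_ne_zero.2 hv
  have hfun : (fun z : ℂ => -((M:ℂ) * Real.pi * ε^2 * z⁻¹))
      = (fun z : ℂ => -((M:ℂ) * Real.pi * ε^2 / z)) := by
    funext z; rw [div_eq_mul_inv]
  have h1 : HasDerivAt (fun z : ℂ => -((M:ℂ) * Real.pi * ε^2 / z))
      ((M:ℂ) * Real.pi * ε^2 / ((τ.im:ℝ):ℂ)^2) ((τ.im:ℝ):ℂ) := by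
    have h0 : HasDerivAt (fun z : ℂ => -((M:ℂ) * Real.pi * ε^2 * z⁻¹)) _ _ := ((hasDerivAt_inv hz).const_mul ((M:ℂ) * Real.pi * ε^2)).neg
    rw [hfun] at h0
    convert h0 using 1
    field_simp
  have h3 := (h1.cexp)
  have h4 := wirt_comp_im (φ := fun z => Complex.exp (-((M:ℂ) * Real.pi * ε^2 / z))) h3
  rw [show (fun σ : ℂ => EE M ε σ) = (fun σ : ℂ =>
      (fun z => Complex.exp (-((M:ℂ) * Real.pi * ε^2 / z))) ((σ.im : ℝ) : ℂ)) from rfl]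
  rw [h4, EE]
  ring

lemma sm_EE (M : ℤ) : Sm (EE M) := by
  intro p hp
  have him : ContDiffAt ℝ ∞ (fun p' : ℂ × ℂ => ((p'.2.im : ℝ) : ℂ)) p :=
    (Complex.ofRealCLM.comp (Complex.imCLM.comp (ContinuousLinearMap.snd ℝ ℂ ℂ))).contDiff.contDiffAt
  have hnum : ContDiffAt ℝ ∞ (fun p' : ℂ × ℂ => -((M:ℂ) * Real.pi * p'.1^2)) p :=
    ((contDiffAt_const.mul ((contDiffAt_fst).pow 2)).neg)
  have hinv : ContDiffAt ℝ ∞ (fun p' : ℂ × ℂ => (((p'.2.im : ℝ) : ℂ))⁻¹) p :=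
    (contDiffAt_inv ℝ (Complex.ofReal_ne_zero.2 hp)).comp p him
  have hquot : ContDiffAt ℝ ∞ (fun p' : ℂ × ℂ => -((M:ℂ) * Real.pi * p'.1^2) / ((p'.2.im : ℝ) : ℂ)) p := by
    have := hnum.mul hinv
    refine this.congr_of_eventuallyEq (Filter.Eventually.of_forall (fun p' => ?_))
    simp [div_eq_mul_inv]
  have hexp : ContDiffAt ℝ ∞ (uncurry (EE M)) p := by
    have := (Complex.contDiff_exp (𝕜 := ℂ) (n := ∞)).restrict_scalars ℝ
    have h5 := this.contDiffAt.comp p hquot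
    refine h5.congr_of_eventuallyEq (Filter.Eventually.of_forall (fun p' => ?_))
    simp [uncurry, EE, neg_div]
  exact hexp

/-! ### The function h = g·E and its heat equation -/

def hF (M : ℤ) (g : ℂ → ℂ → ℂ) : ℂ → ℂ → ℂ := fun ε σ => g ε σ * EE M ε σ

section Main

variable {M : ℤ} {g : ℂ → ℂ → ℂ}

lemma sm_g (hg : ContDiff ℝ ∞ (uncurry g)) : Sm g := fun _ _ => hg.contDiffAt

lemma sm_hF (hg : ContDiff ℝ ∞ (uncurry g)) : Sm (hF M g) := by
  intro p hp
  exact (hg.contDiffAt).mul (sm_EE M p hp)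

lemma g_diff_left (hg : ContDiff ℝ ∞ (uncurry g)) (ε τ : ℂ) :
    DifferentiableAt ℝ (fun e => g e τ) ε :=
  (hasFDerivAt_slice_left g
    ((hg.differentiable (by simp)) (ε, τ))).differentiableAt

lemma deps_hF (hg : ContDiff ℝ ∞ (uncurry g)) (ε τ : ℂ) :
    deps (hF M g) ε τ = deps g ε τ * EE M ε τ
      + g ε τ * (-(2*(M:ℂ)*Real.pi/(τ.im:ℂ))*ε * EE M ε τ) := by
  show wirt (fun e => g e τ * EE M e τ) ε = _
  rw [wirt_mul (g_diff_left hg ε τ)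
    ((hasDerivAt_EE_left M ε τ).differentiableAt.restrictScalars ℝ)]
  rw [wirt_of_hasDerivAt (hasDerivAt_EE_left M ε τ)]
  rfl

lemma contDiff_deps (hg : ContDiff ℝ ∞ (uncurry g)) : ContDiff ℝ ∞ (uncurry (deps g)) := by
  have heq : uncurry (deps g) = fun p : ℂ × ℂ => (fderiv ℝ (uncurry g) p (1, 0)
      - Complex.I * fderiv ℝ (uncurry g) p (Complex.I, 0)) / 2 := by
    funext p
    exact deps_eq_pd g ((hg.differentiable (by simp)) (p.1, p.2))
  rw [heq]
  exact (((hg.fderiv_right (m := ∞) le_rfl).clm_apply contDiff_const).sub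
    (contDiff_const.mul ((hg.fderiv_right (m := ∞) le_rfl).clm_apply contDiff_const))).div_const 2

lemma deps2_hF (hg : ContDiff ℝ ∞ (uncurry g)) (ε τ : ℂ) :
    deps (deps (hF M g)) ε τ
      = deps (deps g) ε τ * EE M ε τ
        + 2 * (deps g ε τ * (-(2*(M:ℂ)*Real.pi/(τ.im:ℂ))*ε * EE M ε τ))
        + g ε τ * ((-(2*(M:ℂ)*Real.pi/(τ.im:ℂ))) * EE M ε τ
            + (-(2*(M:ℂ)*Real.pi/(τ.im:ℂ))*ε) * (-(2*(M:ℂ)*Real.pi/(τ.im:ℂ))*ε * EE M ε τ)) := by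
  have hrw : (fun e => deps (hF M g) e τ) = (fun e => deps g e τ * EE M e τ
      + g e τ * (-(2*(M:ℂ)*Real.pi/(τ.im:ℂ))*e * EE M e τ)) :=
    funext fun e => deps_hF hg e τ
  show wirt (fun e => deps (hF M g) e τ) ε = _
  rw [hrw]
  have hEdiff : DifferentiableAt ℝ (fun e => EE M e τ) ε :=
    (hasDerivAt_EE_left M ε τ).differentiableAt.restrictScalars ℝ
  have hlin : HasDerivAt (fun e : ℂ => -(2*(M:ℂ)*Real.pi/(τ.im:ℂ))*e * EE M e τ)
      (-(2*(M:ℂ)*Real.pi/(τ.im:ℂ)) * EE M ε τ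
        + (-(2*(M:ℂ)*Real.pi/(τ.im:ℂ))*ε) * (-(2*(M:ℂ)*Real.pi/(τ.im:ℂ))*ε * EE M ε τ)) ε := by
    have := ((hasDerivAt_id' (x := ε)).const_mul (-(2*(M:ℂ)*Real.pi/(τ.im:ℂ)))).fun_mul (hasDerivAt_EE_left M ε τ)
    refine this.congr_deriv ?_
    ring
  have hdgl : DifferentiableAt ℝ (fun e => deps g e τ) ε := g_diff_left (contDiff_deps hg) ε τ
  rw [wirt_add (hdgl.fun_mul hEdiff)
      ((g_diff_left hg ε τ).fun_mul (hlin.differentiableAt.restrictScalars ℝ)),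
    wirt_mul hdgl hEdiff,
    wirt_mul (g_diff_left hg ε τ) (hlin.differentiableAt.restrictScalars ℝ),
    wirt_of_hasDerivAt (hasDerivAt_EE_left M ε τ),
    wirt_of_hasDerivAt hlin]
  show deps (deps g) ε τ * EE M ε τ + deps g ε τ * _ + (deps g ε τ * _ + _) = _
  ring

lemma tD_hF (hg : ContDiff ℝ ∞ (uncurry g)) (ε τ : ℂ) (hv : τ.im ≠ 0) :
    tD (hF M g) ε τ = tD g ε τ * EE M ε τ
      + g ε τ * (-Complex.I * ((M:ℂ) * Real.pi * ε^2) / (2 * (τ.im:ℂ)^2) * EE M ε τ) := by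
  show wirt (fun σ => g ε σ * EE M ε σ) τ = _
  rw [wirt_mul ((sm_g hg).diff_right hv) ((sm_EE M).diff_right hv)]
  rw [show wirt (fun σ => EE M ε σ) τ = _ from wirt_EE_right M ε τ hv]
  rfl

lemma pde0 (hg : ContDiff ℝ ∞ (uncurry g))
    (hheat : ∀ (ε τ : ℂ), 0 < τ.im → heatOp M g ε τ = 0) (ε τ : ℂ) (hv : 0 < τ.im) :
    deps (deps (hF M g)) ε τ
      = -(8 * (Real.pi:ℂ) * Complex.I * (M:ℂ)) * tD (hF M g) ε τ
        - 4*((M:ℂ)*(Real.pi:ℂ)/(τ.im:ℂ))*ε * deps (hF M g) ε τ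
        - 2*((M:ℂ)*(Real.pi:ℂ)/(τ.im:ℂ)) * hF M g ε τ := by
  have hvne : τ.im ≠ 0 := ne_of_gt hv
  have hvC : ((τ.im:ℝ):ℂ) ≠ 0 := Complex.ofReal_ne_zero.2 hvne
  have hheat' : 8 * (Real.pi : ℂ) * Complex.I * (M : ℂ) * tD g ε τ + deps (deps g) ε τ = 0 :=
    hheat ε τ hv
  rw [deps2_hF hg ε τ, tD_hF hg ε τ hvne, deps_hF hg ε τ, hF]
  have hd2 : deps (deps g) ε τ = -(8 * (Real.pi : ℂ) * Complex.I * (M : ℂ)) * tD g ε τ := by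
    linear_combination hheat'
  rw [hd2]
  field_simp [hvC]
  ring_nf
  rw [Complex.I_sq]
  ring
end Main

section Induction

variable {M : ℤ} {g : ℂ → ℂ → ℂ}

lemma wirt_comb {T X N : ℂ → ℂ} {ε : ℂ} (c₁ c₂ c₃ : ℂ)
    (hT : DifferentiableAt ℝ T ε) (hX : DifferentiableAt ℝ X ε) (hN : DifferentiableAt ℝ N ε) :
    wirt (fun e => c₁ * T e + c₂ * (e * X e) + c₃ * N e) ε
      = c₁ * wirt T ε + c₂ * (X ε + ε * wirt X ε) + c₃ * wirt N ε := by
  have hid : DifferentiableAt ℝ (fun z : ℂ => z) ε := differentiableAt_fun_id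
  rw [wirt_add ((hT.const_mul c₁).fun_add ((hid.fun_mul hX).const_mul c₂)) (hN.const_mul c₃)]
  rw [wirt_add (hT.const_mul c₁) ((hid.fun_mul hX).const_mul c₂)]
  rw [wirt_const_mul c₁ hT, wirt_const_mul c₂ (hid.fun_mul hX), wirt_const_mul c₃ hN]
  rw [wirt_mul hid hX, wirt_of_hasDerivAt (hasDerivAt_id' (x := ε))]
  ring

lemma Pn (hg : ContDiff ℝ ∞ (uncurry g))
    (hheat : ∀ (ε τ : ℂ), 0 < τ.im → heatOp M g ε τ = 0) :
    ∀ n : ℕ, ∀ ε τ : ℂ, 0 < τ.im →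
    deltaIter (n+2) (hF M g) ε τ
      = (2*Complex.I*(M:ℂ)/(Real.pi:ℂ)) * tD (deltaIter n (hF M g)) ε τ
        + (2*Complex.I*(M:ℂ)/(τ.im:ℂ)) * (ε * deltaIter (n+1) (hF M g) ε τ)
        + ((2*(n:ℂ)+1)*(M:ℂ)/(2*(Real.pi:ℂ)*(τ.im:ℂ))) * deltaIter n (hF M g) ε τ := by
  have smh : Sm (hF M g) := sm_hF hg
  have hπ : ((Real.pi:ℝ):ℂ) ≠ 0 := Complex.ofReal_ne_zero.2 Real.pi_ne_zero
  have hIfrac : (1 / (2 * (Real.pi : ℂ) * Complex.I)) = -Complex.I/(2*(Real.pi:ℂ)) := by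
    rw [one_div, mul_inv, Complex.inv_I]
    ring
  intro n
  induction n with
  | zero =>
    intro ε τ hv
    have hvne : τ.im ≠ 0 := ne_of_gt hv
    have hvC : ((τ.im:ℝ):ℂ) ≠ 0 := Complex.ofReal_ne_zero.2 hvne
    have hdiff : DifferentiableAt ℝ (fun e => deps (hF M g) e τ) ε :=
      (sm_deps smh).diff_left hvne
    show (1 / (2 * (Real.pi : ℂ) * Complex.I))
        * wirt (fun e => (1 / (2 * (Real.pi : ℂ) * Complex.I)) * deps (hF M g) e τ) ε = _
    rw [wirt_const_mul _ hdiff]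
    show (1 / (2 * (Real.pi : ℂ) * Complex.I))
        * ((1 / (2 * (Real.pi : ℂ) * Complex.I)) * deps (deps (hF M g)) ε τ) = _
    rw [pde0 hg hheat ε τ hv]
    rw [hIfrac]
    show _ = (2*Complex.I*(M:ℂ)/(Real.pi:ℂ)) * tD (hF M g) ε τ
        + (2*Complex.I*(M:ℂ)/(τ.im:ℂ))
          * (ε * ((1 / (2 * (Real.pi : ℂ) * Complex.I)) * deps (hF M g) ε τ))

        + ((2*((0:ℕ):ℂ)+1)*(M:ℂ)/(2*(Real.pi:ℂ)*(τ.im:ℂ))) * hF M g ε τ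
    rw [hIfrac]
    push_cast
    ring_nf
    simp only [Complex.I_sq, I_cube, I_four]
    linear_combination (((Real.pi:ℂ))⁻¹ * (M:ℂ) * ((τ.im:ℝ):ℂ)⁻¹ * ε * deps (hF M g) ε τ
      + ((Real.pi:ℂ))⁻¹ * (M:ℂ) * ((τ.im:ℝ):ℂ)⁻¹ * hF M g ε τ * (1/2)
      + ((Real.pi:ℂ))⁻¹ * (M:ℂ) * Complex.I * tD (hF M g) ε τ * 2) * (mul_inv_cancel₀ hπ)
  | succ n ih =>
    intro ε τ hv
    have hvne : τ.im ≠ 0 := ne_of_gt hv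
    have hvC : ((τ.im:ℝ):ℂ) ≠ 0 := Complex.ofReal_ne_zero.2 hvne
    have hsl : (fun e => deltaIter (n+2) (hF M g) e τ) = (fun e =>
        (2*Complex.I*(M:ℂ)/(Real.pi:ℂ)) * tD (deltaIter n (hF M g)) e τ
        + (2*Complex.I*(M:ℂ)/(τ.im:ℂ)) * (e * deltaIter (n+1) (hF M g) e τ)
        + ((2*(n:ℂ)+1)*(M:ℂ)/(2*(Real.pi:ℂ)*(τ.im:ℂ))) * deltaIter n (hF M g) e τ) :=
      funext fun e => ih e τ hv
    show (1 / (2 * (Real.pi : ℂ) * Complex.I))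
        * wirt (fun e => deltaIter (n+2) (hF M g) e τ) ε = _
    rw [hsl]
    rw [wirt_comb _ _ _
      ((sm_tD (sm_deltaIter smh n)).diff_left hvne)
      ((sm_deltaIter smh (n+1)).diff_left hvne)
      ((sm_deltaIter smh n).diff_left hvne)]
    have r1 : tD (deltaIter (n+1) (hF M g)) ε τ
        = (1 / (2 * (Real.pi : ℂ) * Complex.I)) * deps (tD (deltaIter n (hF M g))) ε τ :=
      (deltaEps_tD_comm (sm_deltaIter smh n) hvne).symm
    have r2 : deltaIter (n+2) (hF M g) ε τ
        = (1 / (2 * (Real.pi : ℂ) * Complex.I)) * deps (deltaIter (n+1) (hF M g)) ε τ := rfl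
    have r3 : deltaIter (n+1) (hF M g) ε τ
        = (1 / (2 * (Real.pi : ℂ) * Complex.I)) * deps (deltaIter n (hF M g)) ε τ := rfl
    rw [show wirt (tD (deltaIter n (hF M g)) · τ) ε = deps (tD (deltaIter n (hF M g))) ε τ from rfl]
    rw [show wirt (deltaIter (n+1) (hF M g) · τ) ε = deps (deltaIter (n+1) (hF M g)) ε τ from rfl]
    rw [show wirt (deltaIter n (hF M g) · τ) ε = deps (deltaIter n (hF M g)) ε τ from rfl]
    rw [r1, r2, r3, hIfrac]
    push_cast
    ring_nf
    simp only [Complex.I_sq, I_cube, I_four]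
    ring
end Induction

/-- Even case of Proposition 4.4: for `g` annihilated by the level `M` heat operator,
`δ_ε^{2j}[g(ε;τ)/F^{(0,0)}(ε;τ)]_{ε=0} = (M/π)^j R_{1/2}^j (g(0;τ))`,
where `F^{(0,0)}(ε;τ) = exp(Mπε²/v)`. -/
theorem stmt3 (M : ℤ) (g : ℂ → ℂ → ℂ)
    (hg : ContDiff ℝ (⊤ : ℕ∞) (Function.uncurry g))
    (hheat : ∀ (ε τ : ℂ), 0 < τ.im → heatOp M g ε τ = 0) :
    ∀ (j : ℕ) (τ : ℂ), 0 < τ.im →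
      deltaIter (2 * j)
          (fun ε σ => g ε σ / Complex.exp ((M : ℂ) * (Real.pi : ℂ) * ε ^ 2 / (σ.im : ℂ))) 0 τ
        = ((M : ℂ) / (Real.pi : ℂ)) ^ j * raiseIter (1 / 2) j (fun σ => g 0 σ) τ := by
  have hg' : ContDiff ℝ ∞ (Function.uncurry g) := hg.of_le (by simp)
  have smh : Sm (hF M g) := sm_hF hg'
  have hπ : ((Real.pi:ℝ):ℂ) ≠ 0 := Complex.ofReal_ne_zero.2 Real.pi_ne_zero
  have h0eq : (fun ε σ : ℂ => g ε σ / Complex.exp ((M : ℂ) * (Real.pi : ℂ) * ε ^ 2 / (σ.im : ℂ)))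
      = hF M g := by
    funext ε σ
    rw [hF, EE, div_eq_mul_inv, ← Complex.exp_neg]
  rw [h0eq]
  intro j
  induction j with
  | zero =>
    intro τ hτ
    show hF M g 0 τ = ((M:ℂ)/(Real.pi:ℂ))^0 * (fun σ' => g 0 σ') τ
    simp [hF, EE]
  | succ j ih =>
    intro τ hτ
    have hvne : τ.im ≠ 0 := ne_of_gt hτ
    have hvC : ((τ.im:ℝ):ℂ) ≠ 0 := Complex.ofReal_ne_zero.2 hvne
    have h2j2 : 2*(j+1) = (2*j)+2 := by ring
    rw [h2j2]
    rw [Pn hg' hheat (2*j) 0 τ hτ]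
    simp only [zero_mul, mul_zero, add_zero]
    by_cases hM : (M:ℂ) = 0
    · rw [hM]
      simp [pow_succ]
    · have hc : ((M:ℂ)/(Real.pi:ℂ))^j ≠ 0 := pow_ne_zero _ (div_ne_zero hM hπ)
      have hψev : raiseIter (1/2) j (fun σ' => g 0 σ')
          =ᶠ[nhds τ] (fun σ => (((M:ℂ)/(Real.pi:ℂ))^j)⁻¹ * deltaIter (2*j) (hF M g) 0 σ) := by
        have hop : ∀ᶠ σ : ℂ in nhds τ, 0 < σ.im :=
          (isOpen_lt continuous_const Complex.continuous_im).mem_nhds hτ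
        filter_upwards [hop] with σ hσ
        rw [ih σ hσ, ← mul_assoc, inv_mul_cancel₀ hc, one_mul]
      have hdiffG : DifferentiableAt ℝ (fun σ => deltaIter (2*j) (hF M g) 0 σ) τ :=
        (sm_deltaIter smh (2*j)).diff_right hvne
      have hdiffψ : DifferentiableAt ℝ (raiseIter (1/2) j (fun σ' => g 0 σ')) τ := by
        refine (Filter.EventuallyEq.differentiableAt_iff hψev).2 ?_
        exact hdiffG.const_mul _
      have hGev : (fun σ => deltaIter (2*j) (hF M g) 0 σ)
          =ᶠ[nhds τ] (fun σ => ((M:ℂ)/(Real.pi:ℂ))^j * raiseIter (1/2) j (fun σ' => g 0 σ') σ) := by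
        have hop : ∀ᶠ σ : ℂ in nhds τ, 0 < σ.im :=
          (isOpen_lt continuous_const Complex.continuous_im).mem_nhds hτ
        filter_upwards [hop] with σ hσ
        exact ih σ hσ
      have hWG : tD (deltaIter (2*j) (hF M g)) 0 τ
          = ((M:ℂ)/(Real.pi:ℂ))^j * wirt (raiseIter (1/2) j (fun σ' => g 0 σ')) τ := by
        rw [show tD (deltaIter (2*j) (hF M g)) 0 τ
          = wirt (fun σ => deltaIter (2*j) (hF M g) 0 σ) τ from rfl]
        rw [wirt_congr hGev]
        exact wirt_const_mul _ hdiffψ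
      have hG0 : deltaIter (2*j) (hF M g) 0 τ
          = ((M:ℂ)/(Real.pi:ℂ))^j * raiseIter (1/2) j (fun σ' => g 0 σ') τ := ih τ hτ
      show _ = ((M:ℂ)/(Real.pi:ℂ))^(j+1)
          * (2 * Complex.I * wirt (raiseIter (1/2) j (fun σ' => g 0 σ')) τ
            + ((((1:ℝ)/2 + 2*(j:ℝ)):ℝ):ℂ)/(τ.im:ℂ) * raiseIter (1/2) j (fun σ' => g 0 σ') τ)
      rw [hWG, hG0]
      have hpow : ((M:ℂ)/(Real.pi:ℂ))^(j+1) = ((M:ℂ)/(Real.pi:ℂ))^j * ((M:ℂ)/(Real.pi:ℂ)) :=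
        pow_succ _ _
      push_cast
      rw [hpow]
      generalize ((M:ℂ)/(Real.pi:ℂ))^j = c
      field_simp
      ring
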